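/- Let s, r ≥ 1 and p ≥ 0 be integers. Suppose A ∈ ℝ^{s×s}, U ∈ ℝ^{s×r}, B ∈ ℝ^{r×s}, V ∈ ℝ^{r×r}, c ∈ ℝ^s and q_0,…,q_p ∈ ℝ^r satisfy the stage-order conditions c^k − k·A c^{k−1} − k!·U q_k = 0 for k = 0,1,…,p and the order conditions Σ_{ℓ=0}^{k} (k!/ℓ!)·q_{k−ℓ} − k·B c^{k−1} − k!·V q_k = 0 for k = 0,1,…,p, and suppose α, β ∈ ℝ^{s×s} satisfy the interpolation order conditions α(c−e)^ℓ + β c^ℓ = c^ℓ for ℓ = 0,1,…,p−1. Define B^exp = [[Aα, Aβ],[Bα, Bβ]] ∈ ℝ^{(s+r)×2s}, V^exp = [[0, U],[0, V]] ∈ ℝ^{(s+r)×(s+r)}, c^exp = ((c−e)ᵀ, cᵀ)ᵀ ∈ ℝ^{2s}, and q_k^exp = (((c−e)^k/k!)ᵀ, q_kᵀ)ᵀ ∈ ℝ^{s+r} for k = 0,…,p. Then the order conditions hold for the block method: Σ_{ℓ=0}^{k} (k!/ℓ!)·q_{k−ℓ}^exp − k·B^exp (c^exp)^{k−1} − k!·V^exp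 q_k^exp = 0 for k = 0,1,…,p. -/

import Mathlib

open Matrix

/-!
Expanding `c^k = ((c - e) + e)^k` by the binomial theorem turns the first `s` components of the
block order condition into the stage-order condition of `(A, U, c, q)`. In the block matrices,
`A α (c - e)^(k-1) + A β c^(k-1) = A c^(k-1)` and `B α (c - e)^(k-1) + B β c^(k-1) = B c^(k-1)`
by the interpolation condition of order `k - 1`, so the last `r` components are the order
condition of `(B, V, c, q)`.
-/

theorem sum_factorial_div_mul_sub_one_pow {K : Type*} [Field K] [CharZero K] (k : ℕ) (x : K) :
    ∑ ℓ ∈ Finset.range (k + 1),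
      ((k.factorial : K) / ℓ.factorial) * ((x - 1) ^ (k - ℓ) / (k - ℓ).factorial) = x ^ k := by
  calc _ = ∑ ℓ ∈ Finset.range (k + 1), 1 ^ ℓ * (x - 1) ^ (k - ℓ) * (k.choose ℓ : K) := by
          refine Finset.sum_congr rfl fun ℓ hℓ => ?_
          rw [Nat.cast_choose K (Nat.lt_succ_iff.mp (Finset.mem_range.mp hℓ)), one_pow]
          field_simp
    _ = (1 + (x - 1)) ^ k := (add_pow 1 (x - 1) k).symm
    _ = x ^ k := by ring

theorem fromBlocks_mul_mulVec_sumElim {R l m n o : Type*} [NonUnitalSemiring R] [Fintype l]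
    [Fintype m] [Fintype n] (A : Matrix m l R) (B : Matrix o l R) (α : Matrix l n R)
    (β : Matrix l n R) (x y : n → R) :
    fromBlocks (A * α) (A * β) (B * α) (B * β) *ᵥ Sum.elim x y
      = Sum.elim (A *ᵥ (α *ᵥ x + β *ᵥ y)) (B *ᵥ (α *ᵥ x + β *ᵥ y)) := by
  simp [fromBlocks_mulVec, mulVec_add, mulVec_mulVec]

theorem natCast_smul_interp {R ι : Type*} [Ring R] [Fintype ι] {α β : Matrix ι ι R} {c : ι → R}
    {k : ℕ} (hinterp : k ≠ 0 →
      α *ᵥ (fun i => (c i - 1) ^ (k - 1)) + β *ᵥ (fun i => c i ^ (k - 1)) = fun i => c i ^ (k - 1)) :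
    (k : R) • (α *ᵥ (fun i => (c i - 1) ^ (k - 1)) + β *ᵥ (fun i => c i ^ (k - 1)))
      = (k : R) • fun i => c i ^ (k - 1) := by
  rcases eq_or_ne k 0 with rfl | hk
  · simp
  · rw [hinterp hk]

section Residuals

variable {K ι κ : Type*} [Field K] [Fintype ι] [Fintype κ]

def stageResidual (A : Matrix ι ι K) (U : Matrix ι κ K) (c : ι → K) (q : ℕ → κ → K) (k : ℕ) :
    ι → K :=
  (fun i => c i ^ k) - (k : K) • A *ᵥ (fun i => c i ^ (k - 1)) - (k.factorial : K) • U *ᵥ q k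

def orderResidual (B : Matrix κ ι K) (V : Matrix κ κ K) (c : ι → K) (q : ℕ → κ → K) (k : ℕ) :
    κ → K :=
  (∑ ℓ ∈ Finset.range (k + 1), ((k.factorial : K) / (ℓ.factorial : K)) • q (k - ℓ))
    - (k : K) • B *ᵥ (fun i => c i ^ (k - 1)) - (k.factorial : K) • V *ᵥ q k

theorem orderResidual_fromBlocks [CharZero K] (A : Matrix ι ι K) (U : Matrix ι κ K)
    (B : Matrix κ ι K) (V : Matrix κ κ K) (α β : Matrix ι ι K) (c : ι → K) (q : ℕ → κ → K)
    (k : ℕ) (hinterp : k ≠ 0 →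
      α *ᵥ (fun i => (c i - 1) ^ (k - 1)) + β *ᵥ (fun i => c i ^ (k - 1)) = fun i => c i ^ (k - 1)) :
    orderResidual (fromBlocks (A * α) (A * β) (B * α) (B * β)) (fromBlocks 0 U 0 V)
        (Sum.elim (fun i => c i - 1) c)
        (fun k => Sum.elim (fun i => (c i - 1) ^ k / k.factorial) (q k)) k
      = Sum.elim (stageResidual A U c q k) (orderResidual B V c q k) := by
  have hpow : (fun i => Sum.elim (fun i => c i - 1) c i ^ (k - 1))
      = Sum.elim (fun i => (c i - 1) ^ (k - 1)) (fun i => c i ^ (k - 1)) := by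
    ext (i | i) <;> rfl
  have hA := congrFun (congrArg (A *ᵥ ·) (natCast_smul_interp hinterp))
  have hB := congrFun (congrArg (B *ᵥ ·) (natCast_smul_interp hinterp))
  simp only [mulVec_smul, Pi.smul_apply, smul_eq_mul] at hA hB
  rw [orderResidual, hpow, fromBlocks_mul_mulVec_sumElim, fromBlocks_mulVec]
  ext (i | i)
  · simp [stageResidual, Finset.sum_apply, hA, sum_factorial_div_mul_sub_one_pow]
  · simp [orderResidual, Finset.sum_apply, hB]

end Residuals

theorem stmt1_general (s r p : ℕ)
    (A : Matrix (Fin s) (Fin s) ℝ) (U : Matrix (Fin s) (Fin r) ℝ)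
    (B : Matrix (Fin r) (Fin s) ℝ) (V : Matrix (Fin r) (Fin r) ℝ)
    (c : Fin s → ℝ) (qv : ℕ → Fin r → ℝ)
    (α β : Matrix (Fin s) (Fin s) ℝ)
    (hstage : ∀ k, k ≤ p →
      (fun i => c i ^ k) - (k : ℝ) • A.mulVec (fun i => c i ^ (k - 1))
        - (k.factorial : ℝ) • U.mulVec (qv k) = 0)
    (hord : ∀ k, k ≤ p →
      (∑ ℓ ∈ Finset.range (k + 1), ((k.factorial : ℝ) / (ℓ.factorial : ℝ)) • qv (k - ℓ))
        - (k : ℝ) • B.mulVec (fun i => c i ^ (k - 1))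
        - (k.factorial : ℝ) • V.mulVec (qv k) = 0)
    (hinterp : ∀ ℓ, ℓ < p →
      α.mulVec (fun i => (c i - 1) ^ ℓ) + β.mulVec (fun i => c i ^ ℓ)
        = fun i => c i ^ ℓ) :
    ∀ k, k ≤ p →
      (∑ ℓ ∈ Finset.range (k + 1), ((k.factorial : ℝ) / (ℓ.factorial : ℝ)) •
          Sum.elim (fun j => (c j - 1) ^ (k - ℓ) / ((k - ℓ).factorial : ℝ)) (qv (k - ℓ)))
        - (k : ℝ) • (Matrix.fromBlocks (A * α) (A * β) (B * α) (B * β)).mulVec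
            (fun i => (Sum.elim (fun j => c j - 1) c i) ^ (k - 1))
        - (k.factorial : ℝ) • (Matrix.fromBlocks 0 U 0 V).mulVec
            (Sum.elim (fun j => (c j - 1) ^ k / (k.factorial : ℝ)) (qv k)) = 0 := by
  intro k hk
  have hstage_k : stageResidual A U c qv k = 0 := hstage k hk
  have hord_k : orderResidual B V c qv k = 0 := hord k hk
  have hblock := orderResidual_fromBlocks A U B V α β c qv k fun hk0 => hinterp (k - 1) (by omega)
  rw [hstage_k, hord_k, Sum.elim_zero_zero] at hblock
  exact hblock

/-- If the underlying GLM `(A, U, B, V, c, q_k)` satisfies the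
stage-order and order conditions up to order `p`, and `α, β` satisfy the
interpolation order conditions for `ℓ = 0, …, p-1`, then the block
(extrapolation-based explicit) method satisfies the order conditions up to
order `p`. -/
theorem stmt1 (s r p : ℕ) (hs : 1 ≤ s) (hr : 1 ≤ r)
    (A : Matrix (Fin s) (Fin s) ℝ) (U : Matrix (Fin s) (Fin r) ℝ)
    (B : Matrix (Fin r) (Fin s) ℝ) (V : Matrix (Fin r) (Fin r) ℝ)
    (c : Fin s → ℝ) (qv : ℕ → Fin r → ℝ)
    (α β : Matrix (Fin s) (Fin s) ℝ)
    (hstage : ∀ k, k ≤ p →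
      (fun i => c i ^ k) - (k : ℝ) • A.mulVec (fun i => c i ^ (k - 1))
        - (k.factorial : ℝ) • U.mulVec (qv k) = 0)
    (hord : ∀ k, k ≤ p →
      (∑ ℓ ∈ Finset.range (k + 1), ((k.factorial : ℝ) / (ℓ.factorial : ℝ)) • qv (k - ℓ))
        - (k : ℝ) • B.mulVec (fun i => c i ^ (k - 1))
        - (k.factorial : ℝ) • V.mulVec (qv k) = 0)
    (hinterp : ∀ ℓ, ℓ < p →
      α.mulVec (fun i => (c i - 1) ^ ℓ) + β.mulVec (fun i => c i ^ ℓ)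
        = fun i => c i ^ ℓ) :
    ∀ k, k ≤ p →
      (∑ ℓ ∈ Finset.range (k + 1), ((k.factorial : ℝ) / (ℓ.factorial : ℝ)) •
          Sum.elim (fun j => (c j - 1) ^ (k - ℓ) / ((k - ℓ).factorial : ℝ)) (qv (k - ℓ)))
        - (k : ℝ) • (Matrix.fromBlocks (A * α) (A * β) (B * α) (B * β)).mulVec
            (fun i => (Sum.elim (fun j => c j - 1) c i) ^ (k - 1))
        - (k.factorial : ℝ) • (Matrix.fromBlocks 0 U 0 V).mulVec
            (Sum.elim (fun j => (c j - 1) ^ k / (k.factorial : ℝ)) (qv k)) = 0 :=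
  stmt1_general s r p A U B V c qv α β hstage hord hinterp
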